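/- Let Ĝ be an ℱ-free signed bigraph, and let T be an induced tadpole in Ĝ with vertices labeled w, y, z, x_k, …, x_1 = x (x is the end and w, y, z are the heads). Let x' be a vertex of Ĝ not on T such that either xx' is an edge of Ĝ, or x and x' have a common neighbour that is adjacent to no vertex of T other than x. If x' is adjacent to some head of T, then x' is completely adjacent to T by positive edges, except that the edges x'x and x'w, when present, may be of either sign. -/

import Mathlib

universe u

/-! ## Basic unsigned notions for bipartite graphs -/

/-- `G` has an induced cycle of length at least 6 (signs, if any, are arbitrary). -/
def HasLongInducedCycle {V : Type u} (G : SimpleGraph V) : Prop :=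
  ∃ n : ℕ, 6 ≤ n ∧ ∃ f : ZMod n → V, Function.Injective f ∧
    ∀ i j : ZMod n, G.Adj (f i) (f j) ↔ (j = i + 1 ∨ i = j + 1)

/-- A graph is separable if it contains an induced `2K₂`. -/
def IsSeparableGraph {V : Type u} (G : SimpleGraph V) : Prop :=
  ∃ a b c d : V, [a, b, c, d].Pairwise (· ≠ ·) ∧
    G.Adj a b ∧ G.Adj c d ∧ ¬ G.Adj a c ∧ ¬ G.Adj a d ∧ ¬ G.Adj b c ∧ ¬ G.Adj b d

/-- An edge `ab` of a bipartite graph is simplicial if every vertex of `N(a) - {b}`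
is adjacent to every vertex of `N(b) - {a}`. -/
def SimplicialEdge {V : Type u} (G : SimpleGraph V) (a b : V) : Prop :=
  G.Adj a b ∧ ∀ c ∈ G.neighborSet a \ {b}, ∀ d ∈ G.neighborSet b \ {a}, G.Adj c d

/-- A canonical ordering of a bigraph with bipartition given by `side`
(`X` is the `side = true` part, `Y` the `side = false` part): the neighbourhoods of
the `x`'s are decreasing and those of the `y`'s are increasing. -/
def IsCanonicalOrdering {V : Type u} (G : SimpleGraph V) (side : V → Bool)
    {α β : ℕ} (x : Fin α → V) (y : Fin β → V) : Prop :=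
  Function.Injective x ∧ Function.Injective y ∧
  (∀ w : V, side w = true ↔ w ∈ Set.range x) ∧
  (∀ w : V, side w = false ↔ w ∈ Set.range y) ∧
  (∀ i j : Fin α, i ≤ j → G.neighborSet (x j) ⊆ G.neighborSet (x i)) ∧
  (∀ i j : Fin β, i ≤ j → G.neighborSet (y i) ⊆ G.neighborSet (y j))

/-- `H` is a non-trivial (i.e. containing at least one edge) connected component
of `G - S`. -/
def IsNontrivialComponentOf {V : Type u} (G : SimpleGraph V) (S H : Set V) : Prop :=
  H ⊆ Sᶜ ∧ (G.induce H).Connected ∧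
  (∀ a ∈ H, ∀ b ∈ Sᶜ, G.Adj a b → b ∈ H) ∧
  (∃ a ∈ H, ∃ b ∈ H, G.Adj a b)

/-- `S` minimally separates the non-trivial components `H` and `H'` of `G - S`:
every vertex of `S` has a neighbour in `H` and a neighbour in `H'`. -/
def MinimallySeparates {V : Type u} (G : SimpleGraph V) (S H H' : Set V) : Prop :=
  IsNontrivialComponentOf G S H ∧ IsNontrivialComponentOf G S H' ∧ H ≠ H' ∧
  ∀ s ∈ S, (∃ a ∈ H, G.Adj s a) ∧ (∃ a ∈ H', G.Adj s a)

/-! ## Signed bigraphs -/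

/-- A signed bigraph: a bipartite graph (with bipartition recorded by `side`)
whose edges carry a sign (`true` = positive, `false` = negative). -/
structure SignedBigraph (V : Type u) where
  graph : SimpleGraph V
  sign : V → V → Bool
  sign_symm : ∀ a b : V, sign a b = sign b a
  side : V → Bool
  bipartite : ∀ ⦃a b : V⦄, graph.Adj a b → side a ≠ side b

namespace SignedBigraph

variable {V : Type u}

def Adj (G : SignedBigraph V) (a b : V) : Prop := G.graph.Adj a b

/-- `N(ab) = (N(a) ∪ N(b)) - {a, b}`. -/
def edgeNbhd (G : SignedBigraph V) (a b : V) : Set V :=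
  (G.graph.neighborSet a ∪ G.graph.neighborSet b) \ {a, b}

/-- The edge `ab` is signed simplicial: `N(ab)` induces a positive biclique. -/
def SignedSimplicial (G : SignedBigraph V) (a b : V) : Prop :=
  G.Adj a b ∧
    ∀ c ∈ G.edgeNbhd a b, ∀ d ∈ G.edgeNbhd a b,
      G.side c ≠ G.side d → (G.Adj c d ∧ G.sign c d = true)

/-- Delete a set of edges from a signed bigraph (keeping all vertices). -/
def deleteEdges (G : SignedBigraph V) (s : Set (Sym2 V)) : SignedBigraph V where
  graph := G.graph.deleteEdges s
  sign := G.sign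
  sign_symm := G.sign_symm
  side := G.side
  bipartite := by
    intro a b h
    exact G.bipartite (SimpleGraph.deleteEdges_adj.mp h).1

/-- The induced signed subgraph on a set of vertices. -/
def induce (G : SignedBigraph V) (A : Set V) : SignedBigraph A where
  graph := G.graph.induce A
  sign a b := G.sign a b
  sign_symm a b := G.sign_symm a b
  side a := G.side a
  bipartite := by
    intro a b h
    exact G.bipartite h

/-- A chordal signed bigraph: the edges can be ordered `e₁, …, e_m` so that each `eᵢ`
is a signed simplicial edge of the signed bigraph obtained by deleting `e₁, …, e_{i-1}`. -/
def IsChordal (G : SignedBigraph V) : Prop :=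
  ∃ l : List (Sym2 V), l.Nodup ∧ (∀ e, e ∈ G.graph.edgeSet ↔ e ∈ l) ∧
    ∀ (i : ℕ) (h : i < l.length), ∃ a b : V,
      l.get ⟨i, h⟩ = s(a, b) ∧
      (G.deleteEdges {e | e ∈ l.take i}).SignedSimplicial a b

/-! ## Forbidden patterns F₁ – F₆, D, long cycles -/

/-- `G` contains the all-negative 4-cycle `F₁` as an induced subgraph. -/
def HasF1 (G : SignedBigraph V) : Prop :=
  ∃ u1 u2 v1 v2 : V,
    [u1, u2, v1, v2].Pairwise (· ≠ ·) ∧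
    G.Adj u1 v1 ∧ G.Adj u1 v2 ∧ G.Adj u2 v1 ∧ G.Adj u2 v2 ∧
    ¬ G.Adj u1 u2 ∧ ¬ G.Adj v1 v2 ∧
    G.sign u1 v1 = false ∧ G.sign u1 v2 = false ∧
    G.sign u2 v1 = false ∧ G.sign u2 v2 = false

/-- `G` contains a member of `F₂` (a signed `K_{2,3}`) as an induced subgraph. -/
def HasF2 (G : SignedBigraph V) : Prop :=
  ∃ u1 u2 v1 v2 v3 : V,
    [u1, u2, v1, v2, v3].Pairwise (· ≠ ·) ∧
    G.Adj u1 v1 ∧ G.Adj u1 v2 ∧ G.Adj u1 v3 ∧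
    G.Adj u2 v1 ∧ G.Adj u2 v2 ∧ G.Adj u2 v3 ∧
    ¬ G.Adj u1 u2 ∧ ¬ G.Adj v1 v2 ∧ ¬ G.Adj v1 v3 ∧ ¬ G.Adj v2 v3 ∧
    G.sign u1 v1 = false ∧ G.sign u1 v2 = false ∧
    G.sign u2 v2 = false ∧ G.sign u2 v3 = false

/-- `G` contains a member of `F₃` (a signed `K_{2,4}`) as an induced subgraph. -/
def HasF3 (G : SignedBigraph V) : Prop :=
  ∃ u1 u2 v1 v2 v3 v4 : V,
    [u1, u2, v1, v2, v3, v4].Pairwise (· ≠ ·) ∧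
    G.Adj u1 v1 ∧ G.Adj u1 v2 ∧ G.Adj u1 v3 ∧ G.Adj u1 v4 ∧
    G.Adj u2 v1 ∧ G.Adj u2 v2 ∧ G.Adj u2 v3 ∧ G.Adj u2 v4 ∧
    ¬ G.Adj u1 u2 ∧ ¬ G.Adj v1 v2 ∧ ¬ G.Adj v1 v3 ∧ ¬ G.Adj v1 v4 ∧
    ¬ G.Adj v2 v3 ∧ ¬ G.Adj v2 v4 ∧ ¬ G.Adj v3 v4 ∧
    G.sign u1 v1 = false ∧ G.sign u1 v2 = false ∧
    G.sign u2 v3 = false ∧ G.sign u2 v4 = false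

/-- `G` contains a member of `F₄` (a signed `K_{3,3}` with negative perfect matching)
as an induced subgraph. -/
def HasF4 (G : SignedBigraph V) : Prop :=
  ∃ u1 u2 u3 v1 v2 v3 : V,
    [u1, u2, u3, v1, v2, v3].Pairwise (· ≠ ·) ∧
    G.Adj u1 v1 ∧ G.Adj u1 v2 ∧ G.Adj u1 v3 ∧
    G.Adj u2 v1 ∧ G.Adj u2 v2 ∧ G.Adj u2 v3 ∧
    G.Adj u3 v1 ∧ G.Adj u3 v2 ∧ G.Adj u3 v3 ∧
    ¬ G.Adj u1 u2 ∧ ¬ G.Adj u1 u3 ∧ ¬ G.Adj u2 u3 ∧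
    ¬ G.Adj v1 v2 ∧ ¬ G.Adj v1 v3 ∧ ¬ G.Adj v2 v3 ∧
    G.sign u1 v1 = false ∧ G.sign u2 v2 = false ∧ G.sign u3 v3 = false

/-- `G` contains a member of `F₅` as an induced subgraph. -/
def HasF5 (G : SignedBigraph V) : Prop :=
  ∃ x1 x2 x3 y1 y2 y3 : V,
    [x1, x2, x3, y1, y2, y3].Pairwise (· ≠ ·) ∧
    G.Adj x1 y1 ∧ G.Adj x1 y2 ∧ ¬ G.Adj x1 y3 ∧
    G.Adj x2 y1 ∧ G.Adj x2 y2 ∧ G.Adj x2 y3 ∧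
    G.Adj x3 y1 ∧ G.Adj x3 y2 ∧ G.Adj x3 y3 ∧
    ¬ G.Adj x1 x2 ∧ ¬ G.Adj x1 x3 ∧ ¬ G.Adj x2 x3 ∧
    ¬ G.Adj y1 y2 ∧ ¬ G.Adj y1 y3 ∧ ¬ G.Adj y2 y3 ∧
    G.sign x2 y1 = false ∧ G.sign x3 y2 = false

/-- `G` contains a member of `F₆` as an induced subgraph. -/
def HasF6 (G : SignedBigraph V) : Prop :=
  ∃ x1 x2 x3 x4 y1 y2 y3 y4 : V,
    [x1, x2, x3, x4, y1, y2, y3, y4].Pairwise (· ≠ ·) ∧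
    G.Adj x1 y1 ∧ G.Adj x1 y2 ∧ ¬ G.Adj x1 y3 ∧ ¬ G.Adj x1 y4 ∧
    G.Adj x2 y1 ∧ G.Adj x2 y2 ∧ ¬ G.Adj x2 y3 ∧ ¬ G.Adj x2 y4 ∧
    G.Adj x3 y1 ∧ G.Adj x3 y2 ∧ G.Adj x3 y3 ∧ G.Adj x3 y4 ∧
    G.Adj x4 y1 ∧ G.Adj x4 y2 ∧ G.Adj x4 y3 ∧ G.Adj x4 y4 ∧
    ¬ G.Adj x1 x2 ∧ ¬ G.Adj x1 x3 ∧ ¬ G.Adj x1 x4 ∧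
    ¬ G.Adj x2 x3 ∧ ¬ G.Adj x2 x4 ∧ ¬ G.Adj x3 x4 ∧
    ¬ G.Adj y1 y2 ∧ ¬ G.Adj y1 y3 ∧ ¬ G.Adj y1 y4 ∧
    ¬ G.Adj y2 y3 ∧ ¬ G.Adj y2 y4 ∧ ¬ G.Adj y3 y4 ∧
    G.sign x1 y1 = false ∧ G.sign x2 y1 = false ∧ G.sign x3 y2 = false ∧
    G.sign x4 y3 = false ∧ G.sign x4 y4 = false

/-- `G` contains a member of `D` (a 6-cycle `x₁y₁x₂y₃x₃y₂x₁` plus a negative chord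
`x₂y₂`) as an induced subgraph. -/
def HasD (G : SignedBigraph V) : Prop :=
  ∃ x1 x2 x3 y1 y2 y3 : V,
    [x1, x2, x3, y1, y2, y3].Pairwise (· ≠ ·) ∧
    G.Adj x1 y1 ∧ G.Adj y1 x2 ∧ G.Adj x2 y3 ∧ G.Adj y3 x3 ∧
    G.Adj x3 y2 ∧ G.Adj y2 x1 ∧
    G.Adj x2 y2 ∧ G.sign x2 y2 = false ∧
    ¬ G.Adj x1 y3 ∧ ¬ G.Adj x3 y1 ∧
    ¬ G.Adj x1 x2 ∧ ¬ G.Adj x1 x3 ∧ ¬ G.Adj x2 x3 ∧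
    ¬ G.Adj y1 y2 ∧ ¬ G.Adj y1 y3 ∧ ¬ G.Adj y2 y3

/-- `G` contains an induced signed cycle of length at least 6. -/
def HasLongCycle (G : SignedBigraph V) : Prop :=
  HasLongInducedCycle G.graph

/-! ## Minimal forbidden patterns M₁ – M₅ for complete bigraphs -/

def HasM1 (G : SignedBigraph V) : Prop := G.HasF1

def HasM2 (G : SignedBigraph V) : Prop :=
  ∃ u1 u2 v1 v2 v3 : V,
    [u1, u2, v1, v2, v3].Pairwise (· ≠ ·) ∧
    G.Adj u1 v1 ∧ G.Adj u1 v2 ∧ G.Adj u1 v3 ∧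
    G.Adj u2 v1 ∧ G.Adj u2 v2 ∧ G.Adj u2 v3 ∧
    ¬ G.Adj u1 u2 ∧ ¬ G.Adj v1 v2 ∧ ¬ G.Adj v1 v3 ∧ ¬ G.Adj v2 v3 ∧
    G.sign u1 v1 = false ∧ G.sign u1 v2 = false ∧
    G.sign u2 v2 = false ∧ G.sign u2 v3 = false ∧
    G.sign u1 v3 = true ∧ G.sign u2 v1 = true

def HasM3 (G : SignedBigraph V) : Prop :=
  ∃ u1 u2 v1 v2 v3 v4 : V,
    [u1, u2, v1, v2, v3, v4].Pairwise (· ≠ ·) ∧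
    G.Adj u1 v1 ∧ G.Adj u1 v2 ∧ G.Adj u1 v3 ∧ G.Adj u1 v4 ∧
    G.Adj u2 v1 ∧ G.Adj u2 v2 ∧ G.Adj u2 v3 ∧ G.Adj u2 v4 ∧
    ¬ G.Adj u1 u2 ∧ ¬ G.Adj v1 v2 ∧ ¬ G.Adj v1 v3 ∧ ¬ G.Adj v1 v4 ∧
    ¬ G.Adj v2 v3 ∧ ¬ G.Adj v2 v4 ∧ ¬ G.Adj v3 v4 ∧
    G.sign u1 v1 = false ∧ G.sign u1 v2 = false ∧
    G.sign u2 v3 = false ∧ G.sign u2 v4 = false ∧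
    G.sign u1 v3 = true ∧ G.sign u1 v4 = true ∧
    G.sign u2 v1 = true ∧ G.sign u2 v2 = true

def HasM4 (G : SignedBigraph V) : Prop :=
  ∃ u1 u2 u3 v1 v2 v3 : V,
    [u1, u2, u3, v1, v2, v3].Pairwise (· ≠ ·) ∧
    G.Adj u1 v1 ∧ G.Adj u1 v2 ∧ G.Adj u1 v3 ∧
    G.Adj u2 v1 ∧ G.Adj u2 v2 ∧ G.Adj u2 v3 ∧
    G.Adj u3 v1 ∧ G.Adj u3 v2 ∧ G.Adj u3 v3 ∧
    ¬ G.Adj u1 u2 ∧ ¬ G.Adj u1 u3 ∧ ¬ G.Adj u2 u3 ∧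
    ¬ G.Adj v1 v2 ∧ ¬ G.Adj v1 v3 ∧ ¬ G.Adj v2 v3 ∧
    G.sign u1 v1 = false ∧ G.sign u2 v2 = false ∧ G.sign u3 v3 = false ∧
    G.sign u1 v2 = true ∧ G.sign u1 v3 = true ∧ G.sign u2 v1 = true ∧
    G.sign u2 v3 = true ∧ G.sign u3 v1 = true ∧ G.sign u3 v2 = true

def HasM5 (G : SignedBigraph V) : Prop :=
  ∃ x1 x2 x3 y1 y2 y3 : V,
    [x1, x2, x3, y1, y2, y3].Pairwise (· ≠ ·) ∧
    G.Adj x1 y1 ∧ G.Adj x1 y2 ∧ G.Adj x1 y3 ∧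
    G.Adj x2 y1 ∧ G.Adj x2 y2 ∧ G.Adj x2 y3 ∧
    G.Adj x3 y1 ∧ G.Adj x3 y2 ∧ G.Adj x3 y3 ∧
    ¬ G.Adj x1 x2 ∧ ¬ G.Adj x1 x3 ∧ ¬ G.Adj x2 x3 ∧
    ¬ G.Adj y1 y2 ∧ ¬ G.Adj y1 y3 ∧ ¬ G.Adj y2 y3 ∧
    G.sign x1 y1 = false ∧ G.sign x1 y2 = false ∧
    G.sign x2 y2 = false ∧ G.sign x3 y3 = false ∧
    G.sign x1 y3 = true ∧ G.sign x2 y1 = true ∧ G.sign x2 y3 = true ∧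
    G.sign x3 y1 = true ∧ G.sign x3 y2 = true

/-! ## The patterns W₁ – W₆ (relativized to an ambient vertex set `A`, with the
distinguished vertices being exactly the vertices in `S`). -/

def HasW1In (G : SignedBigraph V) (A S : Set V) : Prop :=
  ∃ u y x z : V, u ∈ A ∧ y ∈ A ∧ x ∈ A ∧ z ∈ A ∧
    [u, y, x, z].Pairwise (· ≠ ·) ∧
    G.Adj u y ∧ G.Adj u z ∧ G.Adj x y ∧ G.Adj x z ∧
    ¬ G.Adj u x ∧ ¬ G.Adj y z ∧
    G.sign x y = false ∧ G.sign x z = false ∧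
    x ∈ S ∧ u ∉ S ∧ y ∉ S ∧ z ∉ S

def HasW2In (G : SignedBigraph V) (A S : Set V) : Prop :=
  ∃ u y v z p : V, u ∈ A ∧ y ∈ A ∧ v ∈ A ∧ z ∈ A ∧ p ∈ A ∧
    [u, y, v, z, p].Pairwise (· ≠ ·) ∧
    G.Adj u y ∧ G.Adj u z ∧ G.Adj v y ∧ G.Adj v z ∧ G.Adj p v ∧
    ¬ G.Adj u v ∧ ¬ G.Adj y z ∧ ¬ G.Adj p u ∧ ¬ G.Adj p y ∧ ¬ G.Adj p z ∧
    G.sign v y = false ∧ G.sign v z = false ∧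
    p ∈ S ∧ u ∉ S ∧ y ∉ S ∧ v ∉ S ∧ z ∉ S

def HasW3In (G : SignedBigraph V) (A S : Set V) : Prop :=
  ∃ u y v z p : V, u ∈ A ∧ y ∈ A ∧ v ∈ A ∧ z ∈ A ∧ p ∈ A ∧
    [u, y, v, z, p].Pairwise (· ≠ ·) ∧
    G.Adj u y ∧ G.Adj u z ∧ G.Adj v y ∧ G.Adj v z ∧ G.Adj p v ∧ G.Adj p u ∧
    ¬ G.Adj u v ∧ ¬ G.Adj y z ∧ ¬ G.Adj p y ∧ ¬ G.Adj p z ∧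
    G.sign v y = false ∧ G.sign v z = false ∧ G.sign p u = false ∧
    p ∈ S ∧ u ∉ S ∧ y ∉ S ∧ v ∉ S ∧ z ∉ S

def HasW4In (G : SignedBigraph V) (A S : Set V) : Prop :=
  ∃ u y c z p q : V, u ∈ A ∧ y ∈ A ∧ c ∈ A ∧ z ∈ A ∧ p ∈ A ∧ q ∈ A ∧
    [u, y, c, z, p, q].Pairwise (· ≠ ·) ∧
    G.Adj u y ∧ G.Adj u z ∧ G.Adj c y ∧ G.Adj c z ∧ G.Adj p c ∧ G.Adj p u ∧
    G.Adj q p ∧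
    ¬ G.Adj u c ∧ ¬ G.Adj y z ∧ ¬ G.Adj p y ∧ ¬ G.Adj p z ∧
    ¬ G.Adj q u ∧ ¬ G.Adj q y ∧ ¬ G.Adj q c ∧ ¬ G.Adj q z ∧
    G.sign c y = false ∧ G.sign c z = false ∧ G.sign p u = false ∧
    q ∈ S ∧ u ∉ S ∧ y ∉ S ∧ c ∉ S ∧ z ∉ S ∧ p ∉ S

def HasW5In (G : SignedBigraph V) (A S : Set V) : Prop :=
  ∃ u y v z x : V, u ∈ A ∧ y ∈ A ∧ v ∈ A ∧ z ∈ A ∧ x ∈ A ∧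
    [u, y, v, z, x].Pairwise (· ≠ ·) ∧
    G.Adj u y ∧ G.Adj u z ∧ G.Adj v y ∧ G.Adj v z ∧ G.Adj x v ∧ G.Adj x u ∧
    ¬ G.Adj u v ∧ ¬ G.Adj y z ∧ ¬ G.Adj x y ∧ ¬ G.Adj x z ∧
    G.sign v y = false ∧ G.sign x u = false ∧
    x ∈ S ∧ y ∈ S ∧ u ∉ S ∧ v ∉ S ∧ z ∉ S

def HasW6In (G : SignedBigraph V) (A S : Set V) : Prop :=
  ∃ u y v z x : V, u ∈ A ∧ y ∈ A ∧ v ∈ A ∧ z ∈ A ∧ x ∈ A ∧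
    [u, y, v, z, x].Pairwise (· ≠ ·) ∧
    G.Adj u y ∧ G.Adj u z ∧ G.Adj v y ∧ G.Adj v z ∧ G.Adj x v ∧
    ¬ G.Adj u v ∧ ¬ G.Adj y z ∧ ¬ G.Adj x u ∧ ¬ G.Adj x y ∧ ¬ G.Adj x z ∧
    G.sign v y = false ∧
    x ∈ S ∧ y ∈ S ∧ u ∉ S ∧ v ∉ S ∧ z ∉ S

/-! ## Tadpoles, sums and joins -/

/-- The vertex set of a tadpole with heads `w, y, z` and path vertices `x`. -/
def tadVerts {n : ℕ} (w y z : V) (x : Fin n → V) : Set V :=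
  {w, y, z} ∪ Set.range x

/-- The data `(w, y, z, x)` forms an induced tadpole in `G`:
`w, y, z, x ⟨k⟩` induce a 4-cycle whose edges `x ⟨k⟩ y` and `x ⟨k⟩ z` are negative,
together with the induced path `x ⟨k⟩, x ⟨k-1⟩, …, x 0`; the vertex `x 0` is the end
and `w, y, z` are the heads.  If `t2 = true` the tadpole is of type 2: there is
additionally a negative edge from `w` to `x ⟨k-1⟩`.
(The paper's parameter `k ≥ 1` corresponds to `k + 1` here.) -/
structure IsInducedTadpole (G : SignedBigraph V) (k : ℕ) (t2 : Bool)
    (w y z : V) (x : Fin (k + 1) → V) : Prop where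
  t2_len : t2 = true → 1 ≤ k
  inj : Function.Injective x
  w_notmem : ∀ i, w ≠ x i
  y_notmem : ∀ i, y ≠ x i
  z_notmem : ∀ i, z ≠ x i
  wy : w ≠ y
  wz : w ≠ z
  yz : y ≠ z
  adj_wy : G.Adj w y
  adj_wz : G.Adj w z
  not_adj_yz : ¬ G.Adj y z
  adj_path : ∀ i j : Fin (k + 1), G.Adj (x i) (x j) ↔ (i.1 + 1 = j.1 ∨ j.1 + 1 = i.1)
  adj_y : ∀ i : Fin (k + 1), G.Adj y (x i) ↔ i.1 = k
  adj_z : ∀ i : Fin (k + 1), G.Adj z (x i) ↔ i.1 = k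
  adj_w : ∀ i : Fin (k + 1), G.Adj w (x i) ↔ (t2 = true ∧ i.1 + 1 = k)
  sign_y : ∀ i : Fin (k + 1), i.1 = k → G.sign (x i) y = false
  sign_z : ∀ i : Fin (k + 1), i.1 = k → G.sign (x i) z = false
  sign_w : ∀ i : Fin (k + 1), t2 = true → i.1 + 1 = k → G.sign w (x i) = false

/-- `G` contains a sum of two tadpoles (identified at their ends) as an induced
subgraph. -/
def HasTadpoleSum (G : SignedBigraph V) : Prop :=
  ∃ (k k' : ℕ) (t t' : Bool) (w y z w' y' z' : V)
    (x : Fin (k + 1) → V) (x' : Fin (k' + 1) → V),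
    G.IsInducedTadpole k t w y z x ∧ G.IsInducedTadpole k' t' w' y' z' x' ∧
    x 0 = x' 0 ∧
    tadVerts w y z x ∩ tadVerts w' y' z' x' = {x 0} ∧
    ∀ a ∈ tadVerts w y z x, ∀ b ∈ tadVerts w' y' z' x',
      a ≠ x 0 → b ≠ x' 0 → ¬ G.Adj a b

/-- `G` contains a join of two tadpoles as an induced subgraph: two disjoint induced
tadpoles such that the edges between them are exactly those joining the end of each
tadpole to all vertices of the other tadpole in the opposite partite set; all these
edges are positive, except that the edge from an end to the head `w` of the other
tadpole may be of either sign when that tadpole is a member of `W₁` (i.e. has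
`k = 0` and is of type 1), in which case the ends are required to be adjacent. -/
def HasTadpoleJoin (G : SignedBigraph V) : Prop :=
  ∃ (k k' : ℕ) (t t' : Bool) (w y z w' y' z' : V)
    (x : Fin (k + 1) → V) (x' : Fin (k' + 1) → V),
    G.IsInducedTadpole k t w y z x ∧ G.IsInducedTadpole k' t' w' y' z' x' ∧
    Disjoint (tadVerts w y z x) (tadVerts w' y' z' x') ∧
    (∀ a ∈ tadVerts w y z x, ∀ b ∈ tadVerts w' y' z' x',
      (G.Adj a b ↔ ((a = x 0 ∨ b = x' 0) ∧ G.side a ≠ G.side b))) ∧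
    ((k = 0 ∧ t = false) ∨ (k' = 0 ∧ t' = false) → G.side (x 0) ≠ G.side (x' 0)) ∧
    (∀ a ∈ tadVerts w y z x, ∀ b ∈ tadVerts w' y' z' x', G.Adj a b →
      ¬ (a = x 0 ∧ b = w' ∧ k' = 0 ∧ t' = false) →
      ¬ (a = w ∧ b = x' 0 ∧ k = 0 ∧ t = false) →
      G.sign a b = true)

/-- `G` contains a member of
`ℱ = F₁ ∪ F₂ ∪ F₃ ∪ F₄ ∪ F₅ ∪ F₆ ∪ 𝒞 ∪ D ∪ 𝒮 ∪ 𝒥` as an induced subgraph. -/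
def HasForbidden (G : SignedBigraph V) : Prop :=
  G.HasF1 ∨ G.HasF2 ∨ G.HasF3 ∨ G.HasF4 ∨ G.HasF5 ∨ G.HasF6 ∨
  G.HasLongCycle ∨ G.HasD ∨ G.HasTadpoleSum ∨ G.HasTadpoleJoin

/-- `G` is `ℱ`-free. -/
def FFree (G : SignedBigraph V) : Prop := ¬ G.HasForbidden

end SignedBigraph

/-! ## Concrete complete signed bipartite graphs (for the graphs M₁ – M₅) -/

/-- The complete bipartite graph on `Fin a ⊕ Fin b`. -/
def cbsGraph (a b : ℕ) : SimpleGraph (Fin a ⊕ Fin b) where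
  Adj u v := u.isLeft ≠ v.isLeft
  symm := ⟨fun _ _ h => Ne.symm h⟩
  loopless := ⟨fun _ h => h rfl⟩

def cbsSign {a b : ℕ} (sgn : Fin a → Fin b → Bool) :
    Fin a ⊕ Fin b → Fin a ⊕ Fin b → Bool
  | Sum.inl i, Sum.inr j => sgn i j
  | Sum.inr j, Sum.inl i => sgn i j
  | _, _ => true

/-- The complete signed bipartite graph with parts `Fin a`, `Fin b`, and signs given
by `sgn`. -/
def completeSignedBigraph (a b : ℕ) (sgn : Fin a → Fin b → Bool) :
    SignedBigraph (Fin a ⊕ Fin b) where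
  graph := cbsGraph a b
  sign := cbsSign sgn
  sign_symm := by
    intro u v
    cases u <;> cases v <;> rfl
  side := Sum.isLeft
  bipartite := fun _ _ h => h

/-- `M₁`: the all-negative 4-cycle. -/
def Mgraph1 : SignedBigraph (Fin 2 ⊕ Fin 2) :=
  completeSignedBigraph 2 2 (fun _ _ => false)

/-- `M₂`. -/
def Mgraph2 : SignedBigraph (Fin 2 ⊕ Fin 3) :=
  completeSignedBigraph 2 3
    (fun i j => ! decide ((i = 0 ∧ (j = 0 ∨ j = 1)) ∨ (i = 1 ∧ (j = 1 ∨ j = 2))))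

/-- `M₃`. -/
def Mgraph3 : SignedBigraph (Fin 2 ⊕ Fin 4) :=
  completeSignedBigraph 2 4
    (fun i j => ! decide ((i = 0 ∧ (j = 0 ∨ j = 1)) ∨ (i = 1 ∧ (j = 2 ∨ j = 3))))

/-- `M₄`. -/
def Mgraph4 : SignedBigraph (Fin 3 ⊕ Fin 3) :=
  completeSignedBigraph 3 3 (fun i j => ! decide ((i : ℕ) = (j : ℕ)))

/-- `M₅`. -/
def Mgraph5 : SignedBigraph (Fin 3 ⊕ Fin 3) :=
  completeSignedBigraph 3 3
    (fun i j => ! decide ((i = 0 ∧ (j = 0 ∨ j = 1)) ∨ (i = 1 ∧ j = 1) ∨ (i = 2 ∧ j = 2)))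


/-!
Root the tadpole path at a neighbour of `x'`: the end `x 0` itself if `x 0 x'` is an edge,
otherwise the common neighbour `c`, put in front of the path. The rooted path, continued through
the heads up to one adjacent to `x'`, is an induced path with both ends adjacent to `x'`. In a
bigraph without induced cycles of length at least 6, a vertex adjacent to both ends of an induced
path is adjacent to exactly every second vertex of it, and if the bigraph is `D`-free these edges
are positive away from the ends. What is left (the head `z` when `x'` sees `y`, the last path
vertex of a type 2 tadpole when `x'` sees `w`, and the signs there and at `y`) is forced by
exhibiting a member of `D`, `F₄` or `F₅`.
-/

namespace SimpleGraph

variable {V : Type u} {G : SimpleGraph V}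

structure IsInducedPath (G : SimpleGraph V) (p : ℕ → V) (n : ℕ) : Prop where
  injOn : ∀ a ≤ n, ∀ b ≤ n, p a = p b → a = b
  adj_iff : ∀ a ≤ n, ∀ b ≤ n, (G.Adj (p a) (p b) ↔ a + 1 = b ∨ b + 1 = a)

namespace IsInducedPath

variable {p : ℕ → V} {n : ℕ}

theorem mono (hp : G.IsInducedPath p n) {m : ℕ} (hmn : m ≤ n) : G.IsInducedPath p m :=
  ⟨fun a ha b hb => hp.injOn a (ha.trans hmn) b (hb.trans hmn),
    fun a ha b hb => hp.adj_iff a (ha.trans hmn) b (hb.trans hmn)⟩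

theorem comp_add (hp : G.IsInducedPath p n) {a m : ℕ} (h : a + m ≤ n) :
    G.IsInducedPath (fun i => p (a + i)) m :=
  ⟨fun i hi j hj hij => by have := hp.injOn _ (by omega) _ (by omega) hij; omega,
    fun i hi j hj => by rw [hp.adj_iff _ (by omega) _ (by omega)]; omega⟩

theorem adj_succ (hp : G.IsInducedPath p n) {i : ℕ} (hi : i + 1 ≤ n) : G.Adj (p i) (p (i + 1)) :=
  (hp.adj_iff i (by omega) (i + 1) hi).2 (Or.inl rfl)

theorem snoc (hp : G.IsInducedPath p n) {u : V} (hu : ∀ i ≤ n, u ≠ p i)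
    (hadj : ∀ i ≤ n, G.Adj u (p i) ↔ i = n) :
    G.IsInducedPath (Function.update p (n + 1) u) (n + 1) := by
  constructor
  · intro a ha b hb hab
    simp only [Function.update_apply] at hab
    split_ifs at hab with h1 h2 h2
    · omega
    · exact absurd hab (hu b (by omega))
    · exact absurd hab.symm (hu a (by omega))
    · exact hp.injOn a (by omega) b (by omega) hab
  · intro a ha b hb
    simp only [Function.update_apply]
    split_ifs with h1 h2 h2
    · simp only [G.irrefl, false_iff]; omega
    · rw [hadj b (by omega)]; omega
    · rw [G.adj_comm, hadj a (by omega)]; omega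
    · exact hp.adj_iff a (by omega) b (by omega)

theorem cons (hp : G.IsInducedPath p n) {c : V} (hc : ∀ i ≤ n, c ≠ p i)
    (hadj : ∀ i ≤ n, G.Adj c (p i) ↔ i = 0) :
    G.IsInducedPath (fun i => if i = 0 then c else p (i - 1)) (n + 1) := by
  constructor
  · intro a ha b hb hab
    split_ifs at hab with h1 h2 h2
    · omega
    · exact absurd hab (hc _ (by omega))
    · exact absurd hab.symm (hc _ (by omega))
    · have := hp.injOn _ (by omega) _ (by omega) hab; omega
  · intro a ha b hb
    split_ifs with h1 h2 h2
    · simp only [G.irrefl, false_iff]; omega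
    · rw [hadj _ (by omega)]; omega
    · rw [G.adj_comm, hadj _ (by omega)]; omega
    · rw [hp.adj_iff _ (by omega) _ (by omega)]; omega

theorem color_eq_iff (hp : G.IsInducedPath p n) (C : G.Coloring Bool) :
    ∀ i ≤ n, C (p i) = C (p 0) ↔ Even i := by
  intro i hi
  induction i with
  | zero => simp
  | succ i ih =>
    have hne : C (p (i + 1)) ≠ C (p i) := (C.valid (hp.adj_succ hi)).symm
    rw [Nat.even_add_one, ← ih (by omega)]
    revert hne
    cases C (p (i + 1)) <;> cases C (p i) <;> cases C (p 0) <;> decide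

theorem even_of_color_ne (hp : G.IsInducedPath p n) (C : G.Coloring Bool) {v : V}
    (h0 : C v ≠ C (p 0)) {i : ℕ} (hi : i ≤ n) (hvi : C v ≠ C (p i)) : Even i := by
  rw [← hp.color_eq_iff C i hi]
  revert h0 hvi
  cases C v <;> cases C (p i) <;> cases C (p 0) <;> decide

theorem even_of_adj (hp : G.IsInducedPath p n) (C : G.Coloring Bool) {v : V}
    (h0 : G.Adj v (p 0)) {i : ℕ} (hi : i ≤ n) (hvi : G.Adj v (p i)) : Even i :=
  hp.even_of_color_ne C (C.valid h0) hi (C.valid hvi)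

end IsInducedPath

theorem _root_.ZMod.eq_add_one_iff {N : ℕ} [NeZero N] (hN : 1 < N) (i j : ZMod N) :
    j = i + 1 ↔ j.val = i.val + 1 ∨ (i.val + 1 = N ∧ j.val = 0) := by
  have : Fact (1 < N) := ⟨hN⟩
  rw [← ZMod.val_injective N |>.eq_iff, ZMod.val_add, ZMod.val_one]
  rcases (Nat.succ_le_of_lt (ZMod.val_lt i)).lt_or_eq with h | h
  · rw [Nat.mod_eq_of_lt h]; omega
  · have := ZMod.val_lt j
    rw [show i.val + 1 = N from h, Nat.mod_self]; omega

theorem hasLongInducedCycle_of_cone {p : ℕ → V} {n : ℕ} (hp : G.IsInducedPath p n) (hn : 4 ≤ n)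
    {v : V} (hv : ∀ i ≤ n, v ≠ p i) (h0 : G.Adj v (p 0)) (hn' : G.Adj v (p n))
    (hmid : ∀ i, 0 < i → i < n → ¬ G.Adj v (p i)) : HasLongInducedCycle G := by
  refine ⟨n + 2, by omega, fun i => if i.val ≤ n then p i.val else v, ?_, ?_⟩
  · intro i j hij
    apply ZMod.val_injective
    have hi := ZMod.val_lt i
    have hj := ZMod.val_lt j
    dsimp only at hij
    split_ifs at hij with h1 h2 h2
    · exact hp.injOn _ h1 _ h2 hij
    · exact absurd hij.symm (hv _ h1)
    · exact absurd hij (hv _ h2)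
    · omega
  · have hvadj : ∀ i ≤ n, G.Adj v (p i) ↔ i = 0 ∨ i = n := by
      refine fun i hi => ⟨fun h => ?_, ?_⟩
      · by_contra hne
        exact hmid i (by omega) (by omega) h
      · rintro (rfl | rfl) <;> assumption
    intro i j
    have hi := ZMod.val_lt i
    have hj := ZMod.val_lt j
    rw [ZMod.eq_add_one_iff (by omega), ZMod.eq_add_one_iff (by omega)]
    dsimp only
    split_ifs with h1 h2 h2
    · rw [hp.adj_iff _ h1 _ h2]; omega
    · rw [G.adj_comm, hvadj _ h1]; omega
    · rw [hvadj _ h2]; omega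
    · simp only [G.irrefl, false_iff]; omega

theorem IsInducedPath.adj_iff_even (hG : ¬ HasLongInducedCycle G) (C : G.Coloring Bool)
    (hp : G.IsInducedPath p n) {v : V} (hv : ∀ i ≤ n, v ≠ p i) (h0 : G.Adj v (p 0))
    (hn : G.Adj v (p n)) : ∀ i ≤ n, G.Adj v (p i) ↔ Even i := by
  intro i hi
  refine ⟨hp.even_of_adj C h0 hi, ?_⟩
  rintro ⟨j, rfl⟩
  induction j with
  | zero => exact h0
  | succ j ih =>
    classical
    have hex : ∃ b, j + j < b ∧ b ≤ n ∧ G.Adj v (p b) := ⟨n, by omega, le_rfl, hn⟩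
    set b := Nat.find hex
    obtain ⟨hjb, hbn, hvb⟩ : j + j < b ∧ b ≤ n ∧ G.Adj v (p b) := Nat.find_spec hex
    have hgap : ∀ l, j + j < l → l < b → ¬ G.Adj v (p l) :=
      fun l h1 h2 h3 => Nat.find_min hex h2 ⟨h1, by omega, h3⟩
    obtain ⟨b', hb'⟩ := hp.even_of_adj C h0 hbn hvb
    suffices b = j + 1 + (j + 1) by rwa [← this]
    -- a longer gap between consecutive neighbours closes an induced cycle of length at least 6
    by_contra hne
    have hpath := hp.comp_add (a := j + j) (m := b - (j + j)) (by omega)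
    refine hG (hasLongInducedCycle_of_cone hpath (by omega) (fun i _ => hv _ (by omega))
      (ih (by omega)) ?_ (fun i h1 h2 => hgap _ (by omega) (by omega)))
    rwa [Nat.add_sub_cancel' hjb.le]

end SimpleGraph

namespace SignedBigraph

variable {V : Type u} {G : SignedBigraph V}

theorem Adj.symm {a b : V} (h : G.Adj a b) : G.Adj b a := SimpleGraph.Adj.symm h

theorem side_eq_of_adj_of_adj {a b c : V} (hab : G.Adj a b) (hbc : G.Adj b c) :
    G.side a = G.side c := by
  have h1 := G.bipartite hab
  have h2 := G.bipartite hbc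
  revert h1 h2
  cases G.side a <;> cases G.side b <;> cases G.side c <;> decide

theorem not_adj_of_side_eq {a b : V} (h : G.side a = G.side b) : ¬ G.Adj a b :=
  fun hab => G.bipartite hab h

theorem hasD_of_adj {x1 x2 x3 y1 y2 y3 : V}
    (a11 : G.Adj x1 y1) (a12 : G.Adj y1 x2) (a23 : G.Adj x2 y3) (a33 : G.Adj y3 x3)
    (a32 : G.Adj x3 y2) (a21 : G.Adj y2 x1) (ach : G.Adj x2 y2) (sch : G.sign x2 y2 = false)
    (n13 : ¬ G.Adj x1 y3) (n31 : ¬ G.Adj x3 y1) : G.HasD := by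
  have hxy := G.bipartite a11
  have sx2 := side_eq_of_adj_of_adj a11 a12
  have sy3 := side_eq_of_adj_of_adj a12 a23
  have sx3 := side_eq_of_adj_of_adj a23 a33
  have sy2 := side_eq_of_adj_of_adj a33 a32
  have : G.Adj x2 y1 := a12.symm
  have : G.Adj x3 y3 := a33.symm
  have : G.Adj x1 y2 := a21.symm
  refine ⟨x1, x2, x3, y1, y2, y3, ?_, a11, a12, a23, a33, a32, a21, ach, sch, n13, n31, ?_⟩
  · simp only [List.pairwise_cons, List.mem_cons, List.not_mem_nil, or_false, forall_eq_or_imp,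
      forall_eq, IsEmpty.forall_iff, implies_true, List.Pairwise.nil, and_true]
    and_intros
    all_goals grind
  · grind [not_adj_of_side_eq]

theorem hasF5_of_adj {x1 x2 x3 y1 y2 y3 : V} (hx : x2 ≠ x3) (hy : y1 ≠ y2)
    (a11 : G.Adj x1 y1) (a12 : G.Adj x1 y2) (n13 : ¬ G.Adj x1 y3)
    (a21 : G.Adj x2 y1) (a22 : G.Adj x2 y2) (a23 : G.Adj x2 y3)
    (a31 : G.Adj x3 y1) (a32 : G.Adj x3 y2) (a33 : G.Adj x3 y3)
    (s21 : G.sign x2 y1 = false) (s32 : G.sign x3 y2 = false) : G.HasF5 := by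
  have hxy := G.bipartite a11
  have sx2 := side_eq_of_adj_of_adj a11 a21.symm
  have sx3 := side_eq_of_adj_of_adj a11 a31.symm
  have sy2 := side_eq_of_adj_of_adj a11.symm a12
  have sy3 := side_eq_of_adj_of_adj a21.symm a23
  refine ⟨x1, x2, x3, y1, y2, y3, ?_, a11, a12, n13, a21, a22, a23, a31, a32, a33, ?_⟩
  · simp only [List.pairwise_cons, List.mem_cons, List.not_mem_nil, or_false, forall_eq_or_imp,
      forall_eq, IsEmpty.forall_iff, implies_true, List.Pairwise.nil, and_true]
    and_intros
    all_goals grind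
  · grind [not_adj_of_side_eq]

theorem hasF4_of_adj {u1 u2 u3 v1 v2 v3 : V} (hu12 : u1 ≠ u2) (hu13 : u1 ≠ u3) (hu23 : u2 ≠ u3)
    (hv12 : v1 ≠ v2) (hv13 : v1 ≠ v3) (hv23 : v2 ≠ v3)
    (a11 : G.Adj u1 v1) (a12 : G.Adj u1 v2) (a13 : G.Adj u1 v3)
    (a21 : G.Adj u2 v1) (a22 : G.Adj u2 v2) (a23 : G.Adj u2 v3)
    (a31 : G.Adj u3 v1) (a32 : G.Adj u3 v2) (a33 : G.Adj u3 v3)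
    (s11 : G.sign u1 v1 = false) (s22 : G.sign u2 v2 = false) (s33 : G.sign u3 v3 = false) :
    G.HasF4 := by
  have huv := G.bipartite a11
  have su2 := side_eq_of_adj_of_adj a11 a21.symm
  have su3 := side_eq_of_adj_of_adj a11 a31.symm
  have sv2 := side_eq_of_adj_of_adj a11.symm a12
  have sv3 := side_eq_of_adj_of_adj a11.symm a13
  refine ⟨u1, u2, u3, v1, v2, v3, ?_, a11, a12, a13, a21, a22, a23, a31, a32, a33, ?_⟩
  · simp only [List.pairwise_cons, List.mem_cons, List.not_mem_nil, or_false, forall_eq_or_imp,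
      forall_eq, IsEmpty.forall_iff, implies_true, List.Pairwise.nil, and_true]
    and_intros
    all_goals grind
  · grind [not_adj_of_side_eq]

theorem FFree.not_hasLongInducedCycle (hF : G.FFree) : ¬ HasLongInducedCycle G.graph :=
  fun h => hF (by simp [HasForbidden, HasLongCycle, h])

theorem FFree.not_hasD (hF : G.FFree) : ¬ G.HasD :=
  fun h => hF (by simp [HasForbidden, h])

theorem FFree.not_hasF4 (hF : G.FFree) : ¬ G.HasF4 :=
  fun h => hF (by simp [HasForbidden, h])

theorem FFree.not_hasF5 (hF : G.FFree) : ¬ G.HasF5 :=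
  fun h => hF (by simp [HasForbidden, h])

def sideColoring (G : SignedBigraph V) : G.graph.Coloring Bool :=
  SimpleGraph.Coloring.mk G.side fun h => G.bipartite h

def IsEvenCone (G : SignedBigraph V) (v : V) (p : ℕ → V) (n : ℕ) : Prop :=
  (∀ i ≤ n, G.Adj v (p i) ↔ Even i) ∧
    ∀ i, 0 < i → i ≤ n → G.Adj v (p i) → G.sign v (p i) = true

section Cones

variable {p q : ℕ → V} {n m : ℕ} {v : V}

theorem IsEvenCone.of_eqOn (h : G.IsEvenCone v p n) (hmn : m ≤ n) (heq : ∀ i ≤ m, q i = p i) :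
    G.IsEvenCone v q m := by
  refine ⟨fun i hi => ?_, fun i h0 hi => ?_⟩
  · rw [heq i hi]; exact h.1 i (hi.trans hmn)
  · rw [heq i hi]; exact h.2 i h0 (hi.trans hmn)

theorem IsEvenCone.snoc (h : G.IsEvenCone v p n) (hadj : G.Adj v (p (n + 1)) ↔ Even (n + 1))
    (hsign : G.Adj v (p (n + 1)) → G.sign v (p (n + 1)) = true) : G.IsEvenCone v p (n + 1) := by
  refine ⟨fun i hi => ?_, fun i h0 hi => ?_⟩
  · rcases hi.lt_or_eq with hi | rfl
    exacts [h.1 i (by omega), hadj]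
  · rcases hi.lt_or_eq with hi | rfl
    exacts [h.2 i h0 (by omega), hsign]

theorem sign_eq_true_of_isInducedPath (hD : ¬ G.HasD) (hp : G.graph.IsInducedPath p n) {i : ℕ}
    (hi : i + 4 ≤ n) (h0 : G.Adj v (p i)) (h2 : G.Adj v (p (i + 2)))
    (h4 : G.Adj v (p (i + 4))) : G.sign v (p (i + 2)) = true := by
  -- a negative `v (p (i + 2))` is a chord of the 6-cycle `p (i+1) p i v p (i+4) p (i+3) p (i+2)`
  by_contra hs
  refine hD (hasD_of_adj (x1 := p (i + 1)) (x3 := p (i + 3)) ?_ h0.symm h4 ?_ ?_ ?_ h2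
    (by simpa using hs) ?_ ?_)
  all_goals rw [Adj, hp.adj_iff _ (by omega) _ (by omega)]; omega

theorem isEvenCone_of_isInducedPath (hG : ¬ HasLongInducedCycle G.graph) (hD : ¬ G.HasD)
    (hp : G.graph.IsInducedPath p (n + 1)) (hv : ∀ i ≤ n + 1, v ≠ p i) (h0 : G.Adj v (p 0))
    (hn : G.Adj v (p (n + 1))) : G.IsEvenCone v p n := by
  have hadj := hp.adj_iff_even hG G.sideColoring hv h0 hn
  have hn1 := (hadj (n + 1) le_rfl).1 hn
  refine ⟨fun i hi => hadj i (by omega), fun i hi0 hin hvi => ?_⟩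
  have hi := Nat.even_iff.1 ((hadj i (by omega)).1 hvi)
  have hev : ∀ k ≤ n + 1, k % 2 = 0 → G.Adj v (p k) :=
    fun k hk hk2 => (hadj k hk).2 (Nat.even_iff.2 hk2)
  rw [Nat.even_iff] at hn1
  obtain ⟨j, rfl⟩ : ∃ j, i = j + 2 := ⟨i - 2, by omega⟩
  exact sign_eq_true_of_isInducedPath hD hp (by omega) (hev _ (by omega) (by omega)) hvi
    (hev _ (by omega) (by omega))

theorem isEvenCone_of_snoc (hG : ¬ HasLongInducedCycle G.graph) (hD : ¬ G.HasD)
    (hp : G.graph.IsInducedPath p n) {u : V} (hu : ∀ i ≤ n, u ≠ p i)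
    (hadj : ∀ i ≤ n, G.Adj u (p i) ↔ i = n) (hv : ∀ i ≤ n, v ≠ p i) (h0 : G.Adj v (p 0))
    (hvu : G.Adj v u) : G.IsEvenCone v p n := by
  refine (isEvenCone_of_isInducedPath hG hD (hp.snoc hu hadj) (fun i hi => ?_) ?_ ?_).of_eqOn
    le_rfl (fun i hi => ?_)
  all_goals simp only [Function.update_apply]
  · split_ifs
    exacts [G.graph.ne_of_adj hvu, hv i (by omega)]
  · rwa [if_neg (by omega)]
  · simpa using hvu
  · rw [if_neg (by omega)]

end Cones

/-- `IsInducedTadpole` with the path `r 0, …, r m` indexed by `ℕ` and ending at the heads; unlike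
`IsInducedTadpole`, it survives putting a vertex in front of the path (`IsTadpolePath.cons`). -/
structure IsTadpolePath (G : SignedBigraph V) (t2 : Bool) (w y z : V) (r : ℕ → V) (m : ℕ) :
    Prop where
  path : G.graph.IsInducedPath r m
  w_ne : ∀ i ≤ m, w ≠ r i
  y_ne : ∀ i ≤ m, y ≠ r i
  z_ne : ∀ i ≤ m, z ≠ r i
  yz : y ≠ z
  adj_wy : G.Adj w y
  adj_wz : G.Adj w z
  adj_y : ∀ i ≤ m, G.Adj y (r i) ↔ i = m
  adj_z : ∀ i ≤ m, G.Adj z (r i) ↔ i = m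
  adj_w : ∀ i ≤ m, G.Adj w (r i) ↔ t2 = true ∧ i + 1 = m
  sign_y : G.sign (r m) y = false
  sign_z : G.sign (r m) z = false
  sign_w : t2 = true → G.sign w (r (m - 1)) = false
  t2_len : t2 = true → 1 ≤ m

def tadpoleVerts (w y z : V) (r : ℕ → V) (m : ℕ) : Set V :=
  {w, y, z} ∪ r '' Set.Iic m

variable {t2 : Bool} {w y z : V}

theorem not_mem_tadpoleVerts {t : V} {r : ℕ → V} {m : ℕ} :
    t ∉ tadpoleVerts w y z r m ↔ t ≠ w ∧ t ≠ y ∧ t ≠ z ∧ ∀ i ≤ m, t ≠ r i := by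
  simp [tadpoleVerts, eq_comm, and_assoc]

theorem IsInducedTadpole.isTadpolePath {k : ℕ} {x : Fin (k + 1) → V}
    (hT : G.IsInducedTadpole k t2 w y z x) :
    G.IsTadpolePath t2 w y z (fun i => x ⟨min i k, by omega⟩) k := by
  have hx : ∀ i (hi : i ≤ k), x ⟨min i k, by omega⟩ = x ⟨i, by omega⟩ :=
    fun i hi => congrArg x (Fin.ext (Nat.min_eq_left hi))
  refine
    { path := ⟨fun a ha b hb h => ?_, fun a ha b hb => ?_⟩
      w_ne := fun i _ => hT.w_notmem _
      y_ne := fun i _ => hT.y_notmem _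
      z_ne := fun i _ => hT.z_notmem _
      yz := hT.yz
      adj_wy := hT.adj_wy
      adj_wz := hT.adj_wz
      adj_y := fun i hi => ?_
      adj_z := fun i hi => ?_
      adj_w := fun i hi => ?_
      sign_y := ?_
      sign_z := ?_
      sign_w := fun ht => ?_
      t2_len := hT.t2_len }
  · rw [hx a ha, hx b hb] at h
    simpa using hT.inj h
  · rw [hx a ha, hx b hb]
    exact hT.adj_path _ _
  · rw [hx i hi]
    exact hT.adj_y _
  · rw [hx i hi]
    exact hT.adj_z _
  · rw [hx i hi]
    exact hT.adj_w _
  · rw [hx k le_rfl]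
    exact hT.sign_y _ rfl
  · rw [hx k le_rfl]
    exact hT.sign_z _ rfl
  · have := hT.t2_len ht
    rw [hx (k - 1) (by omega)]
    exact hT.sign_w _ ht (by simp only; omega)

namespace IsTadpolePath

variable {r : ℕ → V} {m : ℕ} {x' c : V}

theorem swap (hT : G.IsTadpolePath t2 w y z r m) : G.IsTadpolePath t2 w z y r m :=
  { hT with
    y_ne := hT.z_ne, z_ne := hT.y_ne, yz := hT.yz.symm, adj_wy := hT.adj_wz, adj_wz := hT.adj_wy,
    adj_y := hT.adj_z, adj_z := hT.adj_y, sign_y := hT.sign_z, sign_z := hT.sign_y }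

theorem adj_y_last (hT : G.IsTadpolePath t2 w y z r m) : G.Adj y (r m) :=
  (hT.adj_y m le_rfl).2 rfl

theorem adj_z_last (hT : G.IsTadpolePath t2 w y z r m) : G.Adj z (r m) :=
  (hT.adj_z m le_rfl).2 rfl

theorem not_adj_w (hT : G.IsTadpolePath false w y z r m) {i : ℕ} (hi : i ≤ m) :
    ¬ G.Adj w (r i) := by
  simp [hT.adj_w i hi]

theorem adj_w_pred (hT : G.IsTadpolePath true w y z r m) : G.Adj w (r (m - 1)) :=
  (hT.adj_w _ (by omega)).2 ⟨rfl, by have := hT.t2_len rfl; omega⟩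

theorem not_mem_of_adj (hT : G.IsTadpolePath t2 w y z r m) (hc0 : G.Adj c (r 0))
    (hc : ∀ t ∈ tadpoleVerts w y z r m, t ≠ r 0 → ¬ G.Adj c t) :
    c ∉ tadpoleVerts w y z r m := by
  have hr : ∀ i ≤ m, r i ∈ tadpoleVerts w y z r m := fun i hi => Or.inr ⟨i, hi, rfl⟩
  have hw : w ∈ tadpoleVerts w y z r m := Or.inl (by simp)
  have hy : y ∈ tadpoleVerts w y z r m := Or.inl (by simp)
  rw [not_mem_tadpoleVerts]
  refine ⟨?_, ?_, ?_, fun i hi => ?_⟩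
  · rintro rfl
    exact hc y hy (hT.y_ne 0 (Nat.zero_le _)) hT.adj_wy
  · rintro rfl
    exact hc w hw (hT.w_ne 0 (Nat.zero_le _)) hT.adj_wy.symm
  · rintro rfl
    exact hc w hw (hT.w_ne 0 (Nat.zero_le _)) hT.adj_wz.symm
  · rintro rfl
    rcases Nat.eq_zero_or_pos i with rfl | hi0
    · exact G.graph.irrefl hc0
    rcases hi.lt_or_eq with him | rfl
    · refine hc (r (i + 1)) (hr _ him) (fun h => ?_) (hT.path.adj_succ him)
      have := hT.path.injOn _ him 0 (Nat.zero_le _) h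
      omega
    · exact hc y hy (hT.y_ne 0 (Nat.zero_le _)) hT.adj_y_last.symm

theorem cons (hT : G.IsTadpolePath t2 w y z r m) (hc0 : G.Adj c (r 0))
    (hc : ∀ t ∈ tadpoleVerts w y z r m, t ≠ r 0 → ¬ G.Adj c t) :
    G.IsTadpolePath t2 w y z (fun i => if i = 0 then c else r (i - 1)) (m + 1) := by
  obtain ⟨hcw, hcy, hcz, hcr⟩ := not_mem_tadpoleVerts.1 (hT.not_mem_of_adj hc0 hc)
  have hcw' : ¬ G.Adj w c := fun h =>
    hc w (Or.inl (by simp)) (hT.w_ne 0 (Nat.zero_le _)) h.symm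
  have hcy' : ¬ G.Adj y c := fun h =>
    hc y (Or.inl (by simp)) (hT.y_ne 0 (Nat.zero_le _)) h.symm
  have hcz' : ¬ G.Adj z c := fun h =>
    hc z (Or.inl (by simp)) (hT.z_ne 0 (Nat.zero_le _)) h.symm
  refine
    { hT with
      path := hT.path.cons hcr fun i hi => ⟨fun h => ?_, by rintro rfl; exact hc0⟩
      w_ne := fun i hi => ?_
      y_ne := fun i hi => ?_
      z_ne := fun i hi => ?_
      adj_y := fun i hi => ?_
      adj_z := fun i hi => ?_
      adj_w := fun i hi => ?_
      sign_y := by simpa using hT.sign_y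
      sign_z := by simpa using hT.sign_z
      sign_w := fun ht => ?_
      t2_len := fun _ => by omega }
  · by_contra hi0
    refine hc (r i) (Or.inr ⟨i, hi, rfl⟩) (fun h => hi0 ?_) h
    exact hT.path.injOn _ hi 0 (Nat.zero_le _) h
  · split_ifs
    exacts [hcw.symm, hT.w_ne _ (by omega)]
  · split_ifs
    exacts [hcy.symm, hT.y_ne _ (by omega)]
  · split_ifs
    exacts [hcz.symm, hT.z_ne _ (by omega)]
  · split_ifs with h
    · exact iff_of_false hcy' (by omega)
    · exact (hT.adj_y _ (by omega)).trans (by omega)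
  · split_ifs with h
    · exact iff_of_false hcz' (by omega)
    · exact (hT.adj_z _ (by omega)).trans (by omega)
  · split_ifs with h
    · exact iff_of_false hcw' fun ⟨ht, h⟩ => by have := hT.t2_len ht; omega
    · exact (hT.adj_w _ (by omega)).trans (and_congr_right fun _ => by omega)
  · have := hT.t2_len ht
    simpa [show m ≠ 0 by omega] using hT.sign_w ht

theorem isEvenCone_of_adj_y (hT : G.IsTadpolePath t2 w y z r m) (hF : G.FFree)
    (hxr : ∀ i ≤ m, x' ≠ r i) (h0 : G.Adj x' (r 0)) (hy : G.Adj x' y) :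
    G.IsEvenCone x' r m :=
  isEvenCone_of_snoc hF.not_hasLongInducedCycle hF.not_hasD hT.path hT.y_ne hT.adj_y hxr h0 hy

theorem adj_pred_of_adj_y (hT : G.IsTadpolePath t2 w y z r m) (hF : G.FFree)
    (hxr : ∀ i ≤ m, x' ≠ r i) (h0 : G.Adj x' (r 0)) (hy : G.Adj x' y) :
    1 ≤ m ∧ G.Adj x' (r (m - 1)) := by
  have hcone := hT.isEvenCone_of_adj_y hF hxr h0 hy
  have hm : ¬ Even m := fun he =>
    not_adj_of_side_eq (side_eq_of_adj_of_adj hy hT.adj_y_last) ((hcone.1 m le_rfl).2 he)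
  rw [Nat.not_even_iff] at hm
  refine ⟨by omega, (hcone.1 _ (by omega)).2 (Nat.even_iff.2 (by omega))⟩

theorem adj_z_of_adj_y (hT : G.IsTadpolePath t2 w y z r m) (hF : G.FFree)
    (hxr : ∀ i ≤ m, x' ≠ r i) (h0 : G.Adj x' (r 0)) (hy : G.Adj x' y) : G.Adj x' z := by
  obtain ⟨hm, hq⟩ := hT.adj_pred_of_adj_y hF hxr h0 hy
  obtain ⟨m, rfl⟩ : ∃ m', m = m' + 1 := ⟨m - 1, by omega⟩
  rw [Nat.add_sub_cancel] at hq
  have hpred : G.Adj (r m) (r (m + 1)) := hT.path.adj_succ le_rfl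
  -- type 1: a `D` on the 6-cycle `r m, x', y, w, z, r (m+1)` with chord `y (r (m+1))`;
  -- type 2: an `F₅`
  by_contra hz
  cases t2
  · exact hF.not_hasD (hasD_of_adj hq.symm hy hT.adj_wy.symm hT.adj_wz hT.adj_z_last hpred.symm
      hT.adj_y_last (by rw [G.sign_symm]; exact hT.sign_y)
      (fun h => hT.not_adj_w (by omega) h.symm) (fun h => hz h.symm))
  · exact hF.not_hasF5 (hasF5_of_adj (hT.w_ne _ le_rfl).symm (hT.y_ne _ (by omega)) hy hq hz
      hT.adj_y_last.symm hpred.symm hT.adj_z_last.symm hT.adj_wy (by simpa using hT.adj_w_pred)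
      hT.adj_wz hT.sign_y (by simpa using hT.sign_w rfl))

theorem sign_y_of_adj_y (hT : G.IsTadpolePath t2 w y z r m) (hF : G.FFree) (hxw : x' ≠ w)
    (hxr : ∀ i ≤ m, x' ≠ r i) (h0 : G.Adj x' (r 0)) (hy : G.Adj x' y) :
    G.sign x' y = true := by
  have hz := hT.adj_z_of_adj_y hF hxr h0 hy
  obtain ⟨hm, hq⟩ := hT.adj_pred_of_adj_y hF hxr h0 hy
  obtain ⟨m, rfl⟩ : ∃ m', m = m' + 1 := ⟨m - 1, by omega⟩
  rw [Nat.add_sub_cancel] at hq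
  have hpred : G.Adj (r (m + 1)) (r m) := (hT.path.adj_succ le_rfl).symm
  -- `x', r (m + 1), w` against `z, y, r m` is an `F₅` (type 1) or an `F₄` (type 2)
  by_contra hs
  rw [Bool.not_eq_true] at hs
  cases t2
  · exact hF.not_hasF5 (hasF5_of_adj (hxr _ le_rfl).symm hT.yz.symm hT.adj_wz hT.adj_wy
      (hT.not_adj_w (by omega)) hT.adj_z_last.symm hT.adj_y_last.symm hpred hz hy hq
      hT.sign_z hs)
  · exact hF.not_hasF4 (hasF4_of_adj (hxr _ le_rfl).symm (hT.w_ne _ le_rfl).symm hxw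
      hT.yz.symm (hT.z_ne _ (by omega)) (hT.y_ne _ (by omega))
      hT.adj_z_last.symm hT.adj_y_last.symm hpred hz hy hq hT.adj_wz hT.adj_wy
      (by simpa using hT.adj_w_pred) hT.sign_z hs (by simpa using hT.sign_w rfl))

theorem isEvenCone_of_adj_w_of_type1 (hT : G.IsTadpolePath false w y z r m) (hF : G.FFree)
    (hxy : x' ≠ y) (hxr : ∀ i ≤ m, x' ≠ r i) (h0 : G.Adj x' (r 0)) (hw : G.Adj x' w) :
    G.IsEvenCone x' r m := by
  refine (isEvenCone_of_snoc hF.not_hasLongInducedCycle hF.not_hasD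
    (hT.path.snoc hT.y_ne hT.adj_y) (u := w) (fun i hi => ?_) (fun i hi => ?_) (fun i hi => ?_)
    ?_ hw).of_eqOn m.le_succ (fun i hi => ?_)
  all_goals simp only [Function.update_apply]
  · split_ifs
    exacts [G.graph.ne_of_adj hT.adj_wy, hT.w_ne i (by omega)]
  · split_ifs with h
    exacts [iff_of_true hT.adj_wy h, iff_of_false (hT.not_adj_w (by omega)) h]
  · split_ifs
    exacts [hxy, hxr i (by omega)]
  · rwa [if_neg (by omega)]
  · rw [if_neg (by omega)]

theorem isEvenCone_of_adj_w_of_type2 (hT : G.IsTadpolePath true w y z r (m + 1))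
    (hF : G.FFree) (hxr : ∀ i ≤ m + 1, x' ≠ r i) (h0 : G.Adj x' (r 0)) (hw : G.Adj x' w) :
    G.IsEvenCone x' r (m + 1) := by
  have hcone : G.IsEvenCone x' r m :=
    isEvenCone_of_snoc hF.not_hasLongInducedCycle hF.not_hasD (hT.path.mono m.le_succ)
      (fun i hi => hT.w_ne i (by omega)) (fun i hi => (hT.adj_w i (by omega)).trans (by simp))
      (fun i hi => hxr i (by omega)) h0 hw
  have hwm : G.Adj w (r m) := by simpa using hT.adj_w_pred
  have hm : ¬ Even m := fun he =>
    not_adj_of_side_eq (side_eq_of_adj_of_adj hw hwm) ((hcone.1 m le_rfl).2 he)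
  obtain ⟨m, rfl⟩ : ∃ m', m = m' + 1 := ⟨m - 1, by rcases m with _ | m <;> simp_all⟩
  have hq : G.Adj x' (r m) := (hcone.1 m (by omega)).2 (by simpa [Nat.even_add_one] using hm)
  have a10 : G.Adj (r (m + 1)) (r m) := (hT.path.adj_succ (by omega)).symm
  have a21 : G.Adj (r (m + 1 + 1)) (r (m + 1)) := (hT.path.adj_succ le_rfl).symm
  have hqy : ¬ G.Adj (r m) y := fun h => by have := (hT.adj_y m (by omega)).1 h.symm; omega
  have hsw : G.sign w (r (m + 1)) = false := by simpa using hT.sign_w rfl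
  -- otherwise the 6-cycle `r m, x', w, y, r (m+2), r (m+1)` has the negative chord `w (r (m+1))`
  have hlast : G.Adj x' (r (m + 1 + 1)) := by
    by_contra hl
    exact hF.not_hasD (hasD_of_adj hq.symm hw hT.adj_wy hT.adj_y_last a21 a10 hwm hsw hqy
      (fun h => hl h.symm))
  refine hcone.snoc (iff_of_true hlast (by simpa [Nat.even_add_one] using hm)) fun _ => ?_
  by_contra hs
  rw [Bool.not_eq_true, G.sign_symm] at hs
  exact hF.not_hasF5 (hasF5_of_adj (hT.w_ne _ le_rfl) (hxr _ (by omega)).symm a10.symm hq.symm hqy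
    hwm hw.symm hT.adj_wy a21 hlast.symm hT.adj_y_last.symm hsw hs)

theorem isEvenCone_of_adj_w (hT : G.IsTadpolePath t2 w y z r m) (hF : G.FFree) (hxy : x' ≠ y)
    (hxr : ∀ i ≤ m, x' ≠ r i) (h0 : G.Adj x' (r 0)) (hw : G.Adj x' w) :
    G.IsEvenCone x' r m := by
  cases t2
  · exact hT.isEvenCone_of_adj_w_of_type1 hF hxy hxr h0 hw
  · obtain ⟨m, rfl⟩ : ∃ m', m = m' + 1 := ⟨m - 1, by have := hT.t2_len rfl; omega⟩
    exact hT.isEvenCone_of_adj_w_of_type2 hF hxr h0 hw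

theorem adj_w_or_positive_yz (hT : G.IsTadpolePath t2 w y z r m) (hF : G.FFree) (hxw : x' ≠ w)
    (hxr : ∀ i ≤ m, x' ≠ r i) (h0 : G.Adj x' (r 0))
    (hhead : G.Adj x' w ∨ G.Adj x' y ∨ G.Adj x' z) :
    G.Adj x' w ∨ (G.Adj x' y ∧ G.Adj x' z ∧ G.sign x' y = true ∧ G.sign x' z = true) := by
  rcases hhead with hw | hy | hz
  · exact Or.inl hw
  · have hz := hT.adj_z_of_adj_y hF hxr h0 hy
    exact Or.inr ⟨hy, hz, hT.sign_y_of_adj_y hF hxw hxr h0 hy,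
      hT.swap.sign_y_of_adj_y hF hxw hxr h0 hz⟩
  · have hy := hT.swap.adj_z_of_adj_y hF hxr h0 hz
    exact Or.inr ⟨hy, hz, hT.sign_y_of_adj_y hF hxw hxr h0 hy,
      hT.swap.sign_y_of_adj_y hF hxw hxr h0 hz⟩

theorem completeAdjacency (hT : G.IsTadpolePath t2 w y z r m) (hF : G.FFree)
    (hx' : x' ∉ tadpoleVerts w y z r m) (h0 : G.Adj x' (r 0))
    (hhead : G.Adj x' w ∨ G.Adj x' y ∨ G.Adj x' z) :
    (∀ t ∈ tadpoleVerts w y z r m, G.side t ≠ G.side x' → G.Adj x' t) ∧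
    (∀ t ∈ tadpoleVerts w y z r m, G.Adj x' t → t ≠ r 0 → t ≠ w → G.sign x' t = true) := by
  obtain ⟨hxw, hxy, -, hxr⟩ := not_mem_tadpoleVerts.1 hx'
  have hheads := hT.adj_w_or_positive_yz hF hxw hxr h0 hhead
  have hcone : G.IsEvenCone x' r m := by
    rcases hheads with hw | ⟨hy, -⟩
    exacts [hT.isEvenCone_of_adj_w hF hxy hxr h0 hw, hT.isEvenCone_of_adj_y hF hxr h0 hy]
  refine ⟨fun t ht hst => ?_, fun t ht hxt ht0 htw => ?_⟩
  · rcases ht with (rfl | rfl | rfl) | ⟨i, hi, rfl⟩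
    · rcases hheads with hw | ⟨hy, -⟩
      exacts [hw, absurd (side_eq_of_adj_of_adj hT.adj_wy hy.symm) hst]
    · rcases hheads with hw | ⟨hy, -⟩
      exacts [absurd (side_eq_of_adj_of_adj hT.adj_wy.symm hw.symm) hst, hy]
    · rcases hheads with hw | ⟨-, hz, -⟩
      exacts [absurd (side_eq_of_adj_of_adj hT.adj_wz.symm hw.symm) hst, hz]
    · exact (hcone.1 i hi).2 (hT.path.even_of_color_ne G.sideColoring (G.bipartite h0) hi hst.symm)
  · rcases ht with (rfl | rfl | rfl) | ⟨i, hi, rfl⟩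
    · exact absurd rfl htw
    · rcases hheads with hw | ⟨-, -, hsy, -⟩
      exacts [absurd hxt (not_adj_of_side_eq (side_eq_of_adj_of_adj hw hT.adj_wy)), hsy]
    · rcases hheads with hw | ⟨-, -, -, hsz⟩
      exacts [absurd hxt (not_adj_of_side_eq (side_eq_of_adj_of_adj hw hT.adj_wz)), hsz]
    · exact hcone.2 i (Nat.pos_of_ne_zero fun h => ht0 (h ▸ rfl)) hi hxt

end IsTadpolePath

theorem IsInducedTadpole.exists_isTadpolePath {k : ℕ} {x : Fin (k + 1) → V} {x' : V}
    (hT : G.IsInducedTadpole k t2 w y z x) (hx' : x' ∉ tadVerts w y z x)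
    (hconn : G.Adj (x 0) x' ∨ ∃ c : V, G.Adj (x 0) c ∧ G.Adj x' c ∧
      ∀ t ∈ tadVerts w y z x, t ≠ x 0 → ¬ G.Adj c t) :
    ∃ r m, G.IsTadpolePath t2 w y z r m ∧ G.Adj x' (r 0) ∧ x' ∉ tadpoleVerts w y z r m ∧
      tadVerts w y z x ⊆ tadpoleVerts w y z r m ∧ ∀ t ∈ tadVerts w y z x, t = r 0 → t = x 0 := by
  have hX := hT.isTadpolePath
  set X : ℕ → V := fun i => x ⟨min i k, by omega⟩
  have hX0 : X 0 = x 0 := congrArg x (Fin.ext (Nat.zero_min k))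
  have hverts : tadVerts w y z x = tadpoleVerts w y z X k := by
    have hrange : Set.range x = X '' Set.Iic k := by
      ext t
      constructor
      · rintro ⟨j, rfl⟩
        exact ⟨j, Nat.lt_succ_iff.1 j.isLt, congrArg x (Fin.ext (Nat.min_eq_left (by omega)))⟩
      · rintro ⟨i, -, rfl⟩
        exact ⟨_, rfl⟩
    rw [tadVerts, tadpoleVerts, hrange]
  rw [hverts] at hx' hconn ⊢
  rcases hconn with hx0 | ⟨c, hc0, hcx, hc⟩
  · exact ⟨X, k, hX, hX0 ▸ hx0.symm, hx', subset_rfl, fun t _ h => h.trans hX0⟩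
  rw [← hX0] at hc
  have hcT := hX.not_mem_of_adj (hX0 ▸ hc0.symm) hc
  refine ⟨_, _, hX.cons (hX0 ▸ hc0.symm) hc, by simpa using hcx, ?_, ?_, fun t ht h => ?_⟩
  · obtain ⟨hxw, hxy, hxz, hxr⟩ := not_mem_tadpoleVerts.1 hx'
    refine not_mem_tadpoleVerts.2 ⟨hxw, hxy, hxz, fun i hi => ?_⟩
    split_ifs
    exacts [G.graph.ne_of_adj hcx, hxr _ (by omega)]
  · rintro t (ht | ⟨i, hi, rfl⟩)
    · exact Or.inl ht
    · exact Or.inr ⟨i + 1, Nat.succ_le_succ hi, by simp⟩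
  · rw [if_pos rfl] at h
    exact absurd (h ▸ ht) hcT

end SignedBigraph

open SignedBigraph in
/-- Lemma 4.6: let `Ĝ` be `ℱ`-free, `T` an induced tadpole with
end `x 0` and heads `w, y, z`, and `x'` a vertex not on `T` such that either
`x 0 x'` is an edge or `x 0` and `x'` have a common neighbour adjacent to no vertex
of `T` other than `x 0`.  If `x'` is adjacent to a head of `T`, then `x'` is
completely adjacent to `T` by positive edges, except that the edges joining `x'` to
`x 0` or to `w` may be of either sign. -/
theorem tadpole_completeAdjacency
    {V : Type u} (G : SignedBigraph V) (hF : G.FFree)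
    (k : ℕ) (t2 : Bool) (w y z : V) (x : Fin (k + 1) → V)
    (hT : G.IsInducedTadpole k t2 w y z x)
    (x' : V) (hx' : x' ∉ tadVerts w y z x)
    (hconn : G.Adj (x 0) x' ∨
      ∃ c : V, G.Adj (x 0) c ∧ G.Adj x' c ∧
        ∀ t ∈ tadVerts w y z x, t ≠ x 0 → ¬ G.Adj c t)
    (hhead : G.Adj x' w ∨ G.Adj x' y ∨ G.Adj x' z) :
    (∀ t ∈ tadVerts w y z x, G.side t ≠ G.side x' → G.Adj x' t) ∧
    (∀ t ∈ tadVerts w y z x, G.Adj x' t → t ≠ x 0 → t ≠ w →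
      G.sign x' t = true) := by
  obtain ⟨r, m, hT', h0, hx'', hsub, hr0⟩ := hT.exists_isTadpolePath hx' hconn
  obtain ⟨hadj, hsign⟩ := hT'.completeAdjacency hF hx'' h0 hhead
  exact ⟨fun t ht => hadj t (hsub ht),
    fun t ht hxt ht0 => hsign t (hsub ht) hxt fun h => ht0 (hr0 t ht h)⟩
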